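/- arXiv:2006.09872 — 2 statements merged into one kernel-verified Lean document; each statement's English description precedes it below -/
import Mathlib

section
/- For a PFB instance, let σ be an earliest release date ordering of the jobs. Then for every feasible schedule S there exists a feasible permutation schedule Ŝ ordered by σ with Σ_{j=1}^{n} C_j(Ŝ) ≤ Σ_{j=1}^{n} C_j(S). In particular, permutation schedules ordered by σ are optimal for minimizing the total completion time. -/
/-!
Sort the completion times on every machine and hand the `k`-th smallest one to the job
`σ k`. Each machine then uses the same multiset of completion times, so the batch
conditions and the total completion time are unchanged. The precedence conditions
survive because the `k`-th smallest value is monotone in the function: if `f ≤ g`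
pointwise, the `k`-th smallest value of `f` is at most that of `g`. Since `σ` sorts
the release dates, this applies to `r + p 0 ≤ c 0` as well as to
`c (i - 1) + p i ≤ c i`.
-/

/-- A PFB instance has `m+1` machines (indexed by `Fin (m+1)`, so at least one) and
`n+1` jobs (indexed by `Fin (n+1)`, so at least one). `p i` is the processing time of
machine `i`, `b i` its maximum batch size, `r j` the release date of job `j`.
A schedule `c` assigns to machine `i` and job `j` the completion time `c i j`.
`Feasible p b r c` says: (i) each job finishes on the first machine no earlier than its
release date plus `p 0`; (ii) consecutive machines leave enough processing time;
(iii) two jobs with different completion times on a machine differ by at least the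
processing time (jobs with equal completion time form one batch); (iv) at most `b i`
jobs complete at any given time on machine `i`. -/
def Feasible {m n : ℕ} (p b : Fin (m + 1) → ℕ) (r : Fin (n + 1) → ℕ)
    (c : Fin (m + 1) → Fin (n + 1) → ℕ) : Prop :=
  (∀ j, r j + p 0 ≤ c 0 j) ∧
  (∀ (i : Fin m) (j : Fin (n + 1)), c i.castSucc j + p i.succ ≤ c i.succ j) ∧
  (∀ (i : Fin (m + 1)) (j j' : Fin (n + 1)),
      c i j ≠ c i j' → c i j + p i ≤ c i j' ∨ c i j' + p i ≤ c i j) ∧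
  (∀ (i : Fin (m + 1)) (t : ℕ),
      (Finset.univ.filter (fun j => c i j = t)).card ≤ b i)

/-- `c` is a permutation schedule ordered by the permutation `σ`:
on every machine the completion times are nondecreasing along `σ`. -/
def OrderedBy {m n : ℕ} (c : Fin (m + 1) → Fin (n + 1) → ℕ)
    (σ : Equiv.Perm (Fin (n + 1))) : Prop :=
  ∀ i : Fin (m + 1), Monotone fun j => c i (σ j)

open Finset

theorem apply_perm_le_apply_perm_of_le {α : Type*} [LinearOrder α] {N : ℕ}
    {f g : Fin N → α} {πf πg : Equiv.Perm (Fin N)} (hf : Monotone (f ∘ πf))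
    (hg : Monotone (g ∘ πg)) (hfg : ∀ j, f j ≤ g j) (k : Fin N) :
    f (πf k) ≤ g (πg k) := by
  by_contra! hlt
  -- `πg 0, …, πg k` are `k + 1` points with `f`-value below `f (πf k)`, but at most `k` exist
  have hge : k + 1 ≤ #{j | f j < f (πf k)} := by
    rw [← Fin.card_Iic k]
    refine card_le_card_of_injOn πg (fun l hl => ?_) πg.injective.injOn
    simp only [coe_filter, mem_univ, true_and, Set.mem_ofPred_eq]
    exact (hfg _).trans_lt ((hg (mem_Iic.1 hl)).trans_lt hlt)
  have hle : #{j | f j < f (πf k)} ≤ k := by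
    rw [← Fin.card_Iio k]
    refine card_le_card_of_injOn πf.symm (fun j hj => ?_) πf.symm.injective.injOn
    simp only [coe_filter, mem_univ, true_and, Set.mem_ofPred_eq] at hj
    by_contra! hkj
    have := hf (not_lt.1 (by simpa using hkj))
    simp only [Function.comp_apply, Equiv.apply_symm_apply] at this
    exact this.not_gt hj
  omega

theorem card_filter_comp_perm {α : Type*} [Fintype α] (e : Equiv.Perm α) (P : α → Prop)
    [DecidablePred P] : #{j | P (e j)} = #{j | P j} := by
  rw [← card_map e.toEmbedding, map_filter, map_univ_equiv]
  simp

section Schedule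

variable {m n : ℕ}

def sortAlong (c : Fin (m + 1) → Fin (n + 1) → ℕ) (σ : Equiv.Perm (Fin (n + 1))) :
    Fin (m + 1) → Fin (n + 1) → ℕ :=
  fun i j => c i (Tuple.sort (c i) (σ.symm j))

variable {c : Fin (m + 1) → Fin (n + 1) → ℕ} {σ : Equiv.Perm (Fin (n + 1))}

@[simp]
theorem sortAlong_apply_perm (i : Fin (m + 1)) (k : Fin (n + 1)) :
    sortAlong c σ i (σ k) = c i (Tuple.sort (c i) k) := by
  simp [sortAlong]

theorem orderedBy_sortAlong : OrderedBy (sortAlong c σ) σ := fun i _ _ hkl => by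
  simpa using Tuple.monotone_sort (c i) hkl

theorem sum_sortAlong (i : Fin (m + 1)) : ∑ j, sortAlong c σ i j = ∑ j, c i j :=
  Equiv.sum_comp (σ.symm.trans (Tuple.sort (c i))) (c i)

theorem Feasible.sortAlong {p b : Fin (m + 1) → ℕ} {r : Fin (n + 1) → ℕ}
    (hc : Feasible p b r c) (hσ : Monotone fun j => r (σ j)) :
    Feasible p b r (sortAlong c σ) := by
  obtain ⟨hrelease, hchain, hgap, hbatch⟩ := hc
  refine ⟨σ.surjective.forall.2 fun k => ?_, fun i => σ.surjective.forall.2 fun k => ?_,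
    fun i j j' => hgap i _ _, fun i t => ?_⟩
  · simpa using apply_perm_le_apply_perm_of_le (fun _ _ hkl => Nat.add_le_add_right (hσ hkl) _)
      (Tuple.monotone_sort (c 0)) hrelease k
  · simpa using apply_perm_le_apply_perm_of_le
      (fun _ _ hkl => Nat.add_le_add_right (Tuple.monotone_sort (c i.castSucc) hkl) _)
      (Tuple.monotone_sort (c i.succ)) (hchain i) k
  · exact (card_filter_comp_perm (σ.symm.trans (Tuple.sort (c i))) (c i · = t)).trans_le
      (hbatch i t)

end Schedule

theorem stmt2_general {m n : ℕ} (p b : Fin (m + 1) → ℕ) (r : Fin (n + 1) → ℕ)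
    (c : Fin (m + 1) → Fin (n + 1) → ℕ) (hc : Feasible p b r c)
    (σ : Equiv.Perm (Fin (n + 1))) (hσ : Monotone fun j => r (σ j)) :
    ∃ chat : Fin (m + 1) → Fin (n + 1) → ℕ,
      Feasible p b r chat ∧ OrderedBy chat σ ∧
      ∑ j, chat (Fin.last m) j ≤ ∑ j, c (Fin.last m) j := by
  exact ⟨sortAlong c σ, hc.sortAlong hσ, orderedBy_sortAlong, (sum_sortAlong _).le⟩

/-- for any earliest release date ordering `σ` and any feasible schedule
`c`, there is a feasible permutation schedule ordered by `σ` whose total completion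
time is at most that of `c`; in particular such permutation schedules are optimal for
minimizing the total completion time. -/
theorem stmt2 {m n : ℕ} (p b : Fin (m + 1) → ℕ) (r : Fin (n + 1) → ℕ)
    (hp : ∀ i, 1 ≤ p i) (hb : ∀ i, 1 ≤ b i ∧ b i ≤ n + 1)
    (c : Fin (m + 1) → Fin (n + 1) → ℕ) (hc : Feasible p b r c)
    (σ : Equiv.Perm (Fin (n + 1))) (hσ : Monotone fun j => r (σ j)) :
    ∃ chat : Fin (m + 1) → Fin (n + 1) → ℕ,
      Feasible p b r chat ∧ OrderedBy chat σ ∧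
      ∑ j, chat (Fin.last m) j ≤ ∑ j, c (Fin.last m) j :=
  stmt2_general p b r c hc σ hσ
end

section
/- Let S be a feasible schedule for a PFB instance in which all jobs are released at time 0 (r_j = 0 for all j). Then there exists a feasible permutation schedule Ŝ (ordered by some permutation of the jobs) such that C_j(Ŝ) = C_j(S) for every job j ∈ {1,…,n}. -/
/-!
Sort every machine's completion times independently and give the `k`-th smallest one to the
job in position `k` of the last machine's order. Each machine keeps its multiset of completion
times, so batch separation and capacity are untouched, and the common release date still
precedes every completion on the first machine. Precedence between consecutive machines
survives because order statistics are monotone: if `f j + p ≤ g j` for all `j`, then the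
`k`-th smallest value of `f`, plus `p`, is at most the `k`-th smallest value of `g`.
-/

namespace Tuple

variable {α : Type*} [LinearOrder α] {N : ℕ}

theorem apply_sort_le_apply_sort {f g : Fin N → α} (h : f ≤ g) (k : Fin N) :
    f (sort f k) ≤ g (sort g k) := by
  by_contra! hlt
  -- Pigeonhole: `sort g` gives `k + 1` indices `j` with `f j ≤ g j < f (sort f k)`,
  -- but by monotonicity of `f ∘ sort f` at most `k` indices have `f j < f (sort f k)`.
  have small : ∀ l ∈ Finset.Iic k, (sort f)⁻¹ (sort g l) ∈ Finset.Iio k := by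
    intro l hl
    rw [Finset.mem_Iio, ← not_le]
    intro hkl
    have hfl := monotone_sort f hkl
    simp only [Function.comp_apply, Equiv.Perm.coe_inv, Equiv.apply_symm_apply] at hfl
    exact absurd ((h _).trans (monotone_sort g (Finset.mem_Iic.mp hl)))
      (not_le.mpr (hlt.trans_le hfl))
  have hinj : Set.InjOn (fun l => (sort f)⁻¹ (sort g l)) (Finset.Iic k : Set (Fin N)) :=
    fun a _ b _ hab => (sort g).injective ((sort f)⁻¹.injective hab)
  have := Finset.card_le_card_of_injOn _ small hinj
  simp [Fin.card_Iio, Fin.card_Iic] at this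

theorem apply_sort_comp_of_monotone {β : Type*} [LinearOrder β] {φ : α → β} (hφ : Monotone φ)
    (f : Fin N → α) (k : Fin N) : (φ ∘ f) (sort (φ ∘ f) k) = φ (f (sort f k)) :=
  congrFun ((comp_sort_eq_comp_iff_monotone (f := φ ∘ f)).mpr (hφ.comp (monotone_sort f))).symm k

end Tuple

theorem Finset.card_filter_comp_perm {ι α : Type*} [Fintype ι] (π : Equiv.Perm ι) (f : ι → α)
    (a : α) [DecidableEq α] :
    (univ.filter fun j => f (π j) = a).card = (univ.filter fun j => f j = a).card :=
  Finset.card_equiv π (by simp)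

def sortedSchedule {m n : ℕ} (c : Fin (m + 1) → Fin (n + 1) → ℕ) :
    Fin (m + 1) → Fin (n + 1) → ℕ :=
  fun i j => c i (Tuple.sort (c i) ((Tuple.sort (c (Fin.last m)))⁻¹ j))

section sortedSchedule

variable {m n : ℕ} (c : Fin (m + 1) → Fin (n + 1) → ℕ)

theorem sortedSchedule_last : sortedSchedule c (Fin.last m) = c (Fin.last m) := by
  ext j
  simp [sortedSchedule]

theorem orderedBy_sortedSchedule :
    OrderedBy (sortedSchedule c) (Tuple.sort (c (Fin.last m))) := by
  intro i
  simpa [sortedSchedule, Function.comp_def] using Tuple.monotone_sort (c i)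

theorem feasible_sortedSchedule {p b : Fin (m + 1) → ℕ} {r : Fin (n + 1) → ℕ} {ρ : ℕ}
    (hr : ∀ j, r j = ρ) (hc : Feasible p b r c) : Feasible p b r (sortedSchedule c) := by
  obtain ⟨release, precedence, separation, capacity⟩ := hc
  set σ := Tuple.sort (c (Fin.last m))
  refine ⟨fun j => ?_, fun i j => ?_, fun i j j' => separation i _ _, fun i t => ?_⟩
  · have h := release (Tuple.sort (c 0) (σ⁻¹ j))
    rw [hr] at h ⊢
    exact h
  · have := Tuple.apply_sort_le_apply_sort (f := (· + p i.succ) ∘ c i.castSucc)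
      (g := c i.succ) (precedence i) (σ⁻¹ j)
    rwa [Tuple.apply_sort_comp_of_monotone (φ := (· + p i.succ)) add_left_mono] at this
  · exact (Finset.card_filter_comp_perm (Tuple.sort (c i) * σ⁻¹) (c i) t).trans_le
      (capacity i t)

end sortedSchedule

theorem stmt9_general {m n : ℕ} (p b : Fin (m + 1) → ℕ) (r : Fin (n + 1) → ℕ)
    (hr : ∀ j, r j = 0)
    (c : Fin (m + 1) → Fin (n + 1) → ℕ) (hc : Feasible p b r c) :
    ∃ chat : Fin (m + 1) → Fin (n + 1) → ℕ,
      Feasible p b r chat ∧ (∃ σ : Equiv.Perm (Fin (n + 1)), OrderedBy chat σ) ∧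
      ∀ j : Fin (n + 1), chat (Fin.last m) j = c (Fin.last m) j :=
  ⟨sortedSchedule c, feasible_sortedSchedule c hr hc, ⟨_, orderedBy_sortedSchedule c⟩,
    congrFun (sortedSchedule_last c)⟩

/-- if all release dates are `0`, then for every feasible schedule `c`
there is a feasible permutation schedule (ordered by some permutation) with exactly
the same completion time for every job on the last machine. -/
theorem stmt9 {m n : ℕ} (p b : Fin (m + 1) → ℕ) (r : Fin (n + 1) → ℕ)
    (hp : ∀ i, 1 ≤ p i) (hb : ∀ i, 1 ≤ b i ∧ b i ≤ n + 1)
    (hr : ∀ j, r j = 0)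
    (c : Fin (m + 1) → Fin (n + 1) → ℕ) (hc : Feasible p b r c) :
    ∃ chat : Fin (m + 1) → Fin (n + 1) → ℕ,
      Feasible p b r chat ∧ (∃ σ : Equiv.Perm (Fin (n + 1)), OrderedBy chat σ) ∧
      ∀ j : Fin (n + 1), chat (Fin.last m) j = c (Fin.last m) j :=
  stmt9_general p b r hr c hc
end
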